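/- arXiv:1903.09723 — 7 statements merged into one kernel-verified Lean document; each statement's English description precedes it below -/
import Mathlib

section
/- Let (Γ, w) be a connected weighted graph with 0 < L_w and B_w < ∞. Then there exists a maximal reduced weight function w* on Γ with w* ≤ w; namely w*(x,y) = d_w(x,y) for each edge (x,y) is reduced, satisfies w* ≤ w, and any reduced weight function u with u ≤ w satisfies u ≤ w*. -/
/-!
The capped path metric `d_w` is a pseudometric: it vanishes on the diagonal and satisfies the
triangle inequality (concatenate near-optimal walks; the cap `B` is harmless since `d_w ≥ 0`).
Any function with these two properties is bounded on an edge by its own sum along every walk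
between the endpoints, which is reducedness of `w* = d_w`. Conversely, a reduced `u ≤ w` is
bounded on an edge by every `w`-walk sum and by `w ≤ B`, hence by their infimum `d_w`.
-/

/-- The total weight of a walk in a weighted graph. -/
noncomputable def walkSum {V : Type*} {G : SimpleGraph V} (w : V → V → ℝ)
    {x y : V} (p : G.Walk x y) : ℝ :=
  (p.darts.map fun d => w d.toProd.1 d.toProd.2).sum

open Classical in
/-- The path metric `d_w(x,y) = min(B, δ_w(x,y))`, realized as the infimum of the
set consisting of the cap `B` together with all total weights of walks from `x` to `y`
(so `d_w(x,y) = B` when there is no walk), with `d_w(x,x) = 0`. -/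
noncomputable def dW {V : Type*} (G : SimpleGraph V) (w : V → V → ℝ) (B : ℝ)
    (x y : V) : ℝ :=
  if x = y then 0 else sInf ({B} ∪ {s : ℝ | ∃ p : G.Walk x y, s = walkSum w p})

open SimpleGraph

section WalkSum

variable {V : Type*} {G : SimpleGraph V}

@[simp]
lemma walkSum_nil (w : V → V → ℝ) (x : V) : walkSum w (Walk.nil : G.Walk x x) = 0 := by
  simp [walkSum]

@[simp]
lemma walkSum_cons (w : V → V → ℝ) {x y z : V} (h : G.Adj x y) (p : G.Walk y z) :
    walkSum w (Walk.cons h p) = w x y + walkSum w p := by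
  simp [walkSum]

@[simp]
lemma walkSum_append (w : V → V → ℝ) {x y z : V} (p : G.Walk x y) (q : G.Walk y z) :
    walkSum w (p.append q) = walkSum w p + walkSum w q := by
  simp [walkSum, Walk.darts_append]

lemma walkSum_nonneg {w : V → V → ℝ} (hw : ∀ x y, G.Adj x y → 0 ≤ w x y) {x y : V}
    (p : G.Walk x y) : 0 ≤ walkSum w p :=
  List.sum_nonneg fun _ ha => by
    obtain ⟨d, -, rfl⟩ := List.mem_map.1 ha
    exact hw _ _ d.adj

lemma walkSum_mono {u w : V → V → ℝ} (h : ∀ x y, G.Adj x y → u x y ≤ w x y) {x y : V}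
    (p : G.Walk x y) : walkSum u p ≤ walkSum w p :=
  List.sum_le_sum fun d _ => h _ _ d.adj

lemma le_walkSum_of_triangle (d : V → V → ℝ) (hd : ∀ x, d x x = 0)
    (htri : ∀ x y z, d x z ≤ d x y + d y z) {x y : V} (p : G.Walk x y) :
    d x y ≤ walkSum d p := by
  induction p with
  | nil => simp [hd]
  | @cons a b c h p ih =>
    rw [walkSum_cons]
    linarith [htri a b c]

end WalkSum

section PathMetric

variable {V : Type*} {G : SimpleGraph V} {w : V → V → ℝ} {B : ℝ}

@[simp]
lemma dW_self (x : V) : dW G w B x x = 0 := if_pos rfl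

lemma dW_of_ne {x y : V} (h : x ≠ y) :
    dW G w B x y = sInf ({B} ∪ {s : ℝ | ∃ p : G.Walk x y, s = walkSum w p}) := if_neg h

lemma le_dW {x y : V} (hxy : x ≠ y) {c : ℝ} (hcB : c ≤ B)
    (hc : ∀ p : G.Walk x y, c ≤ walkSum w p) : c ≤ dW G w B x y := by
  rw [dW_of_ne hxy]
  refine le_csInf ⟨B, Or.inl rfl⟩ ?_
  rintro s (rfl | ⟨p, rfl⟩)
  exacts [hcB, hc p]

variable (hw : ∀ x y, G.Adj x y → 0 ≤ w x y) (hB : 0 ≤ B)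
include hw hB

lemma zero_mem_lowerBounds_capped_walkSums (x y : V) :
    0 ∈ lowerBounds ({B} ∪ {s : ℝ | ∃ p : G.Walk x y, s = walkSum w p}) := by
  rintro s (rfl | ⟨p, rfl⟩)
  exacts [hB, walkSum_nonneg hw p]

lemma dW_nonneg (x y : V) : 0 ≤ dW G w B x y := by
  rcases eq_or_ne x y with rfl | hxy
  · simp
  · exact le_dW hxy hB fun p => walkSum_nonneg hw p

lemma dW_le_walkSum {x y : V} (p : G.Walk x y) : dW G w B x y ≤ walkSum w p := by
  rcases eq_or_ne x y with rfl | hxy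
  · simpa using walkSum_nonneg hw p
  · rw [dW_of_ne hxy]
    exact csInf_le ⟨0, zero_mem_lowerBounds_capped_walkSums hw hB x y⟩ (Or.inr ⟨p, rfl⟩)

lemma dW_le_cap (x y : V) : dW G w B x y ≤ B := by
  rcases eq_or_ne x y with rfl | hxy
  · simpa using hB
  · rw [dW_of_ne hxy]
    exact csInf_le ⟨0, zero_mem_lowerBounds_capped_walkSums hw hB x y⟩ (Or.inl rfl)

lemma dW_triangle (x y z : V) : dW G w B x z ≤ dW G w B x y + dW G w B y z := by
  rcases eq_or_ne x y with rfl | hxy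
  · simp
  rcases eq_or_ne y z with rfl | hyz
  · simp
  have hcap := dW_le_cap hw hB x z
  suffices dW G w B x z - dW G w B y z ≤ dW G w B x y by linarith
  refine le_dW hxy (by linarith [dW_nonneg hw hB y z]) fun p => ?_
  suffices dW G w B x z - walkSum w p ≤ dW G w B y z by linarith
  refine le_dW hyz (by linarith [walkSum_nonneg hw p]) fun q => ?_
  have := dW_le_walkSum hw hB (p.append q)
  rw [walkSum_append] at this
  linarith

end PathMetric

/-- Reducedness of `w*` is expressed by the path condition of Lemma 2.2: on an edge, `w*` is at
most its own total weight along every walk between the endpoints. -/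
theorem stmt_2_general {V : Type*} (G : SimpleGraph V) (w : V → V → ℝ)
    (L B : ℝ)
    (hL : IsGLB {r : ℝ | ∃ x y : V, G.Adj x y ∧ r = w x y} L)
    (hB : IsLUB {r : ℝ | ∃ x y : V, G.Adj x y ∧ r = w x y} B)
    (hLpos : 0 < L) :
    (∀ x y : V, G.Adj x y → dW G w B x y ≤ w x y) ∧
    (∀ x y : V, G.Adj x y → ∀ p : G.Walk x y,
      dW G w B x y ≤ walkSum (fun a b => dW G w B a b) p) ∧
    (∀ u : V → V → ℝ, (∀ x y : V, u x y = u y x) →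
      (∀ x y : V, G.Adj x y → u x y ≤ w x y) →
      (∀ x y : V, G.Adj x y → ∀ p : G.Walk x y, u x y ≤ walkSum u p) →
      ∀ x y : V, G.Adj x y → u x y ≤ dW G w B x y) := by
  have hw : ∀ x y, G.Adj x y → 0 ≤ w x y := fun x y h => hLpos.le.trans (hL.1 ⟨x, y, h, rfl⟩)
  have hwB : ∀ x y, G.Adj x y → w x y ≤ B := fun x y h => hB.1 ⟨x, y, h, rfl⟩
  have hB0 : ∀ x y, G.Adj x y → 0 ≤ B := fun x y h => (hw x y h).trans (hwB x y h)
  refine ⟨fun x y hxy => ?_, fun x y hxy p => ?_, fun u _ hu hred x y hxy => ?_⟩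
  · simpa using dW_le_walkSum hw (hB0 x y hxy) (Walk.cons hxy .nil)
  · exact le_walkSum_of_triangle _ dW_self (dW_triangle hw (hB0 x y hxy)) p
  · exact le_dW hxy.ne ((hu x y hxy).trans (hwB x y hxy))
      fun p => (hred x y hxy p).trans (walkSum_mono hu p)

/-- for a connected weighted graph `(Γ, w)` with `0 < L_w` and
`B_w < ∞`, the weight function `w* (x,y) = d_w(x,y)` (on edges) is reduced,
satisfies `w* ≤ w`, and is maximal among reduced weight functions `u ≤ w`.
(Here reducedness is expressed by the equivalent path condition of Lemma 2.2.) -/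
theorem stmt_2 {V : Type*} (G : SimpleGraph V) (w : V → V → ℝ)
    (hsymm : ∀ x y : V, w x y = w y x)
    (L B : ℝ)
    (hL : IsGLB {r : ℝ | ∃ x y : V, G.Adj x y ∧ r = w x y} L)
    (hB : IsLUB {r : ℝ | ∃ x y : V, G.Adj x y ∧ r = w x y} B)
    (hLpos : 0 < L)
    (hconn : G.Connected) :
    (∀ x y : V, G.Adj x y → dW G w B x y ≤ w x y) ∧
    (∀ x y : V, G.Adj x y → ∀ p : G.Walk x y,
      dW G w B x y ≤ walkSum (fun a b => dW G w B a b) p) ∧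
    (∀ u : V → V → ℝ, (∀ x y : V, u x y = u y x) →
      (∀ x y : V, G.Adj x y → u x y ≤ w x y) →
      (∀ x y : V, G.Adj x y → ∀ p : G.Walk x y, u x y ≤ walkSum u p) →
      ∀ x y : V, G.Adj x y → u x y ≤ dW G w B x y) :=
  stmt_2_general G w L B hL hB hLpos
end

section
/- Let X be a metric space, (Y, φ) a minimal S-extension of X. Then Y is a homogeneous metric space: for all y_1, y_2 ∈ Y there is a surjective isometry of Y sending y_2 to y_1. -/
/-! Minimality says that `Y` is the orbit of `a₀` under products of the isometries `φ(p)`;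
an isometry group with a single orbit acts transitively, via `g₁ * g₂⁻¹`. -/

/-- `f` (with domain the finite set `D`) is a partial isometry of the subspace `X`
of `Y`. -/
def IsPartialIso {Y : Type*} [MetricSpace Y] (X : Set Y) (D : Finset Y) (f : Y → Y) : Prop :=
  ↑D ⊆ X ∧ (∀ a ∈ D, f a ∈ X) ∧ ∀ a ∈ D, ∀ b ∈ D, dist (f a) (f b) = dist a b

namespace IsometryEquiv

variable {Y : Type*} [PseudoEMetricSpace Y]

theorem list_foldr_apply_eq_prod_apply {ι : Type*} (f : ι → Y ≃ᵢ Y) (l : List ι) (x : Y) :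
    l.foldr (fun i y => f i y) x = (l.map f).prod x := by
  induction l with
  | nil => rfl
  | cons i l ih => simp only [List.foldr_cons, List.map_cons, List.prod_cons, mul_apply, ih]

theorem exists_apply_eq_of_forall_exists_apply_eq {x₀ : Y} (horbit : ∀ y, ∃ g : Y ≃ᵢ Y, g x₀ = y)
    (y₁ y₂ : Y) : ∃ ψ : Y ≃ᵢ Y, ψ y₂ = y₁ := by
  obtain ⟨g₁, rfl⟩ := horbit y₁
  obtain ⟨g₂, rfl⟩ := horbit y₂
  exact ⟨g₁ * g₂⁻¹, by rw [mul_apply, inv_apply_self]⟩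

end IsometryEquiv

theorem stmt_6_general {Y : Type*} [MetricSpace Y] (X : Set Y) (a₀ : Y)
    (φ : Finset Y → (Y → Y) → (Y ≃ᵢ Y))
    (hmin : ∀ y : Y, ∃ l : List (Finset Y × (Y → Y)),
        (∀ p ∈ l, IsPartialIso X p.1 p.2) ∧
        y = l.foldr (fun p z => φ p.1 p.2 z) a₀) :
    ∀ y₁ y₂ : Y, ∃ ψ : Y ≃ᵢ Y, ψ y₂ = y₁ := by
  refine IsometryEquiv.exists_apply_eq_of_forall_exists_apply_eq (x₀ := a₀) fun y => ?_
  obtain ⟨l, -, rfl⟩ := hmin y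
  exact ⟨(l.map fun p => φ p.1 p.2).prod,
    (IsometryEquiv.list_foldr_apply_eq_prod_apply (fun p => φ p.1 p.2) l a₀).symm⟩

/-- if `(Y, φ)` is a minimal S-extension of `X` (every point of `Y`
has the form `φ(p₁)⋯φ(pₙ)(a₀)`), then `Y` is homogeneous: for all `y₁, y₂ ∈ Y`
there is a surjective isometry of `Y` sending `y₂` to `y₁`. -/
theorem stmt_6 {Y : Type*} [MetricSpace Y] (X : Set Y) (a₀ : Y) (ha₀ : a₀ ∈ X)
    (φ : Finset Y → (Y → Y) → (Y ≃ᵢ Y))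
    (hφ : ∀ D f, IsPartialIso X D f → ∀ a ∈ D, φ D f a = f a)
    (hmin : ∀ y : Y, ∃ l : List (Finset Y × (Y → Y)),
        (∀ p ∈ l, IsPartialIso X p.1 p.2) ∧
        y = l.foldr (fun p z => φ p.1 p.2 z) a₀) :
    ∀ y₁ y₂ : Y, ∃ ψ : Y ≃ᵢ Y, ψ y₂ = y₁ :=
  stmt_6_general X a₀ φ hmin
end

section
/- Every finite homogeneous ultrametric space is ultrahomogeneous: if Y is a finite ultrametric space such that for all y_1, y_2 ∈ Y there is a surjective isometry of Y sending y_1 to y_2, then every isometry between two subsets of Y extends to a surjective isometry of Y. -/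
/-!
Extend the partial isometry one point at a time. If `y ∉ A` and `a₀ ∈ A` is nearest to `y`, at
distance `r > 0`, then `d(y, a) = max r (d(a₀, a))` for every `a ∈ A`, so it suffices to find `z`
with `d(f a₀, z) ≤ r` whose open `r`-ball contains no point of `f '' A`. The closed ball
`closedBall a₀ r` is partitioned into open `r`-balls, one of which (that of `y`) misses `A`.
An isometry of `Y` carrying `a₀` to `f a₀` shows that `closedBall (f a₀) r` is partitioned into
equally many `r`-balls, while `f '' A` meets at most as many of them as `A` meets in
`closedBall a₀ r`; so one of them misses `f '' A`. Finally, an isometric self-map of a finite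
space is bijective.
-/

open Metric Set Function

namespace IsUltrametricDist

variable {X : Type*} [PseudoMetricSpace X] [IsUltrametricDist X] {w p x : X} {r : ℝ}

lemma dist_eq_max_of_dist_le (hwp : dist w p ≤ r) (hwx : dist p x ≤ r → r ≤ dist w x) :
    dist w x = max r (dist p x) := by
  refine le_antisymm ((dist_triangle_max w p x).trans (max_le_max_right _ hwp)) ?_
  rcases le_or_gt (dist p x) r with hpx | hpx
  · exact max_le (hwx hpx) (hpx.trans (hwx hpx))
  · have hpx_le : dist p x ≤ dist w x := by
      have := dist_triangle_max p w x
      rw [dist_comm p w] at this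
      exact (le_max_iff.1 this).resolve_left (hwp.trans_lt hpx).not_ge
    exact max_le (hpx.le.trans hpx_le) hpx_le

lemma ball_eq_ball_iff (hr : 0 < r) : ball x r = ball p r ↔ dist x p < r :=
  ⟨fun h => mem_ball.1 (h ▸ mem_ball_self hr), fun h => (ball_eq_of_mem h).symm⟩

end IsUltrametricDist

lemma Set.ncard_image_le_ncard_image_of_eq_imp_eq {α β γ : Type*} {s : Set α} {g : α → β}
    {k : α → γ} (hs : s.Finite) (h : ∀ a ∈ s, ∀ b ∈ s, g a = g b → k a = k b) :
    (k '' s).ncard ≤ (g '' s).ncard := by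
  rcases s.eq_empty_or_nonempty with rfl | ⟨a₀, -⟩
  · simp
  have : Nonempty α := ⟨a₀⟩
  have hsub : k '' s ⊆ (k ∘ invFunOn g s) '' (g '' s) := by
    rintro _ ⟨a, ha, rfl⟩
    obtain ⟨ha', hga'⟩ := invFunOn_pos (f := g) ⟨a, ha, rfl⟩
    exact ⟨g a, mem_image_of_mem g ha, h _ ha' a ha hga'⟩
  calc (k '' s).ncard ≤ ((k ∘ invFunOn g s) '' (g '' s)).ncard :=
        ncard_le_ncard hsub ((hs.image g).image _)
    _ ≤ (g '' s).ncard := ncard_image_le (hs.image g)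

lemma IsometryEquiv.ncard_image_ball_closedBall {X Y : Type*} [PseudoMetricSpace X]
    [PseudoMetricSpace Y] (ψ : X ≃ᵢ Y) (p : X) (r : ℝ) :
    ((ball · r) '' closedBall (ψ p) r).ncard = ((ball · r) '' closedBall p r).ncard := by
  have hballs : (ball · r) '' closedBall (ψ p) r = image ψ '' ((ball · r) '' closedBall p r) := by
    rw [← ψ.image_closedBall, image_image, image_image]
    exact image_congr fun x _ => (ψ.image_ball x r).symm
  rw [hballs, ncard_image_of_injective _ (image_injective.mpr ψ.injective)]

lemma forall_dist_update_eq {X : Type*} [PseudoMetricSpace X] [DecidableEq X] {S : Set X} {f : X → X} {y z : X}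
    (hf : ∀ a ∈ S, ∀ b ∈ S, dist (f a) (f b) = dist a b) (hy : y ∉ S)
    (hz : ∀ a ∈ S, dist z (f a) = dist y a) :
    ∀ a ∈ insert y S, ∀ b ∈ insert y S,
      dist (update f y z a) (update f y z b) = dist a b := by
  have hne : ∀ a ∈ S, a ≠ y := fun a ha hay => hy (hay ▸ ha)
  rintro a (rfl | ha) b (rfl | hb)
  · simp
  · rw [update_self, update_of_ne (hne b hb), hz b hb]
  · rw [update_self, update_of_ne (hne a ha), dist_comm, hz a ha, dist_comm]
  · rw [update_of_ne (hne a ha), update_of_ne (hne b hb), hf a ha b hb]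

section Extension

open IsUltrametricDist

variable {Y : Type*} [MetricSpace Y] [IsUltrametricDist Y] [Finite Y] {A : Set Y} {f : Y → Y}

lemma exists_forall_dist_eq_of_nearest (hf : ∀ a ∈ A, ∀ b ∈ A, dist (f a) (f b) = dist a b)
    {y a₀ : Y} (ha₀ : a₀ ∈ A) (hnear : ∀ a ∈ A, dist y a₀ ≤ dist y a) (hr : 0 < dist y a₀)
    (ψ : Y ≃ᵢ Y) (hψ : ψ a₀ = f a₀) :
    ∃ z, ∀ a ∈ A, dist z (f a) = dist y a := by
  set r := dist y a₀
  set N := A ∩ closedBall a₀ r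
  have hfewer : ((ball · r) '' (f '' N)).ncard < ((ball · r) '' closedBall (f a₀) r).ncard :=
    calc ((ball · r) '' (f '' N)).ncard ≤ ((ball · r) '' N).ncard := by
          rw [image_image]
          refine ncard_image_le_ncard_image_of_eq_imp_eq (toFinite N) fun a ha b hb hab => ?_
          rw [ball_eq_ball_iff hr] at hab ⊢
          rwa [hf a ha.1 b hb.1]
      _ < ((ball · r) '' closedBall a₀ r).ncard := by
          refine ncard_lt_ncard ⟨image_mono inter_subset_right, fun h => ?_⟩
          obtain ⟨a, ha, hay⟩ := h ⟨y, mem_closedBall.2 le_rfl, rfl⟩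
          rw [ball_eq_ball_iff hr, dist_comm] at hay
          exact (hnear a ha.1).not_gt hay
      _ = ((ball · r) '' closedBall (f a₀) r).ncard := by
          rw [← hψ, ψ.ncard_image_ball_closedBall]
  obtain ⟨_, ⟨z, hz, rfl⟩, hzfree⟩ := exists_mem_notMem_of_ncard_lt_ncard hfewer
  refine ⟨z, fun a ha => ?_⟩
  have hy : dist y a = max r (dist a₀ a) := dist_eq_max_of_dist_le le_rfl fun _ => hnear a ha
  have hz : dist z (f a) = max r (dist (f a₀) (f a)) := by
    refine dist_eq_max_of_dist_le hz fun hle => not_lt.1 fun hlt => hzfree ?_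
    rw [hf a₀ ha₀ a ha] at hle
    refine ⟨f a, ⟨a, ⟨ha, mem_closedBall_comm.1 hle⟩, rfl⟩, ?_⟩
    rwa [ball_eq_ball_iff hr, dist_comm]
  rw [hy, hz, hf a₀ ha₀ a ha]

lemma exists_forall_dist_eq (hhom : ∀ y₁ y₂ : Y, ∃ ψ : Y ≃ᵢ Y, ψ y₁ = y₂)
    (hf : ∀ a ∈ A, ∀ b ∈ A, dist (f a) (f b) = dist a b) (y : Y) :
    ∃ z, ∀ a ∈ A, dist z (f a) = dist y a := by
  rcases A.eq_empty_or_nonempty with rfl | hA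
  · exact ⟨y, by simp⟩
  obtain ⟨a₀, ha₀, hnear⟩ := exists_min_image A (dist y) (toFinite A) hA
  rcases (dist_nonneg (x := y) (y := a₀)).eq_or_lt with h0 | hr
  · rw [eq_comm, dist_eq_zero] at h0
    subst h0
    exact ⟨f y, hf y ha₀⟩
  · obtain ⟨ψ, hψ⟩ := hhom a₀ (f a₀)
    exact exists_forall_dist_eq_of_nearest hf ha₀ hnear hr ψ hψ

lemma exists_isometry_eqOn (hhom : ∀ y₁ y₂ : Y, ∃ ψ : Y ≃ᵢ Y, ψ y₁ = y₂)
    (hf : ∀ a ∈ A, ∀ b ∈ A, dist (f a) (f b) = dist a b) :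
    ∃ g : Y → Y, Isometry g ∧ EqOn g f A := by
  classical
  suffices ∀ B : Set Y,
      ∃ g : Y → Y, (∀ a ∈ A ∪ B, ∀ b ∈ A ∪ B, dist (g a) (g b) = dist a b) ∧ EqOn g f A by
    obtain ⟨g, hg, hgf⟩ := this univ
    exact ⟨g, Isometry.of_dist_eq fun a b => hg a (by simp) b (by simp), hgf⟩
  intro B
  induction B, toFinite B using Set.Finite.induction_on with
  | empty => exact ⟨f, by simpa using hf, fun _ _ => rfl⟩
  | @insert y B _ _ ih =>
    obtain ⟨g, hg, hgf⟩ := ih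
    rw [union_insert]
    by_cases hy : y ∈ A ∪ B
    · rw [insert_eq_of_mem hy]
      exact ⟨g, hg, hgf⟩
    · obtain ⟨z, hz⟩ := exists_forall_dist_eq hhom hg y
      refine ⟨update g y z, forall_dist_update_eq hg hy hz, fun a ha => ?_⟩
      rw [update_of_ne (ne_of_mem_of_not_mem ha fun h => hy (Or.inl h)), hgf ha]

end Extension

/-- every finite homogeneous ultrametric space is ultrahomogeneous:
if for all `y₁, y₂` there is a surjective isometry sending `y₁` to `y₂`, then every
isometry between two subsets of `Y` extends to a surjective isometry of `Y`. -/
theorem stmt_7 {Y : Type*} [MetricSpace Y] [Finite Y]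
    (hum : ∀ x y z : Y, dist x z ≤ max (dist x y) (dist y z))
    (hhom : ∀ y₁ y₂ : Y, ∃ ψ : Y ≃ᵢ Y, ψ y₁ = y₂) :
    ∀ (A : Set Y) (f : Y → Y),
      (∀ a ∈ A, ∀ b ∈ A, dist (f a) (f b) = dist a b) →
      ∃ ψ : Y ≃ᵢ Y, ∀ a ∈ A, ψ a = f a := by
  have : IsUltrametricDist Y := ⟨hum⟩
  intro A f hf
  obtain ⟨g, hg, hgf⟩ := exists_isometry_eqOn hhom hf
  exact ⟨⟨Equiv.ofBijective g (Finite.injective_iff_bijective.1 hg.injective), hg⟩,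
    fun a ha => hgf ha⟩
end

section
/- Every finite ultrametric space X can be isometrically embedded into a finite homogeneous ultrametric space Y whose set of nonzero distances equals the set of nonzero distances of X. -/
/-!
Take as coordinates the nonzero distances `r` of `X`, and send `x` to the family of its open
balls `B(x, r)`. On families indexed by the levels, let the distance of `a ≠ b` be the largest
level at which they differ. In an ultrametric space two points have the same ball of radius `r`
exactly when their distance is `< r`, so the largest level at which `x` and `y` differ is
`d(x, y)` itself: the embedding is isometric and only distances of `X` occur. The space of all
families is homogeneous because permuting the possible values of each coordinate separately
preserves the set of levels at which two families differ.
-/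

open Finset Function Metric NNReal

section MaxDiffDist

variable {ι C C' : Type*} [Fintype ι] [DecidableEq C] [DecidableEq C'] (w : ι → ℝ≥0)

def maxDiffDist (a b : ι → C) : ℝ≥0 :=
  univ.sup fun i => if a i = b i then 0 else w i

variable {w}

theorem le_maxDiffDist {a b : ι → C} {i : ι} (h : a i ≠ b i) : w i ≤ maxDiffDist w a b :=
  calc w i = if a i = b i then 0 else w i := (if_neg h).symm
    _ ≤ maxDiffDist w a b := le_sup (f := fun i => if a i = b i then 0 else w i) (mem_univ i)

theorem maxDiffDist_le_iff {a b : ι → C} {t : ℝ≥0} :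
    maxDiffDist w a b ≤ t ↔ ∀ i, a i ≠ b i → w i ≤ t := by
  simp only [maxDiffDist, Finset.sup_le_iff, mem_univ, true_implies]
  refine forall_congr' fun i => ?_
  split_ifs with h <;> simp [h]

@[simp]
theorem maxDiffDist_self (a : ι → C) : maxDiffDist w a a = 0 := by
  simp [maxDiffDist]

theorem maxDiffDist_comm (a b : ι → C) : maxDiffDist w a b = maxDiffDist w b a := by
  simp_rw [maxDiffDist, eq_comm]

theorem maxDiffDist_le_max (a b c : ι → C) :
    maxDiffDist w a c ≤ max (maxDiffDist w a b) (maxDiffDist w b c) := by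
  refine maxDiffDist_le_iff.2 fun i hac => ?_
  by_cases hab : a i = b i
  · exact le_max_of_le_right (le_maxDiffDist (hab ▸ hac))
  · exact le_max_of_le_left (le_maxDiffDist hab)

theorem maxDiffDist_eq_zero (hw : ∀ i, 0 < w i) {a b : ι → C} :
    maxDiffDist w a b = 0 ↔ a = b := by
  refine ⟨fun h => funext fun i => ?_, by rintro rfl; exact maxDiffDist_self a⟩
  by_contra hi
  exact (h ▸ le_maxDiffDist hi).not_gt (hw i)

theorem maxDiffDist_mem_range {a b : ι → C} (hab : a ≠ b) : maxDiffDist w a b ∈ Set.range w := by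
  obtain ⟨j, hj⟩ := Function.ne_iff.1 hab
  obtain ⟨i, -, hi⟩ := exists_mem_eq_sup univ ⟨j, mem_univ j⟩
    fun i => if a i = b i then 0 else w i
  split_ifs at hi
  · have hwj : w j = 0 := nonpos_iff_eq_zero.1 (hi ▸ le_maxDiffDist hj)
    exact ⟨j, hwj.trans hi.symm⟩
  · exact ⟨i, hi.symm⟩

theorem maxDiffDist_eq_of_ne_iff {a b : ι → C} {t : ℝ≥0} (ht : ∀ i, a i ≠ b i ↔ w i ≤ t)
    {i₀ : ι} (hi₀ : w i₀ = t) : maxDiffDist w a b = t :=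
  le_antisymm (maxDiffDist_le_iff.2 fun i h => (ht i).1 h)
    (hi₀ ▸ le_maxDiffDist ((ht i₀).2 hi₀.le))

theorem maxDiffDist_map {σ : ι → C → C'} (hσ : ∀ i, Injective (σ i)) (a b : ι → C) :
    maxDiffDist w (fun i => σ i (a i)) (fun i => σ i (b i)) = maxDiffDist w a b := by
  simp only [maxDiffDist, (hσ _).eq_iff]

theorem exists_bijective_maxDiffDist_eq (y₁ y₂ : ι → C) :
    ∃ f : (ι → C) → (ι → C), Bijective f ∧
      (∀ a b, maxDiffDist w (f a) (f b) = maxDiffDist w a b) ∧ f y₁ = y₂ :=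
  ⟨fun a i => Equiv.swap (y₁ i) (y₂ i) (a i),
    (Equiv.piCongrRight fun i => Equiv.swap (y₁ i) (y₂ i)).bijective,
    maxDiffDist_map fun i => (Equiv.swap (y₁ i) (y₂ i)).injective,
    funext fun _ => Equiv.swap_apply_left _ _⟩

end MaxDiffDist

theorem IsUltrametricDist.ball_eq_ball_iff_s11 {X : Type*} [PseudoMetricSpace X]
    [IsUltrametricDist X] {x y : X} {r : ℝ} (hr : 0 < r) :
    ball x r = ball y r ↔ dist x y < r :=
  ⟨fun h => mem_ball'.1 (h ▸ mem_ball_self hr), fun h => ball_eq_of_mem (mem_ball'.2 h)⟩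

section BallCode

variable {X : Type*} [MetricSpace X]

variable (X) in
def nonzeroNNDists : Set ℝ≥0 := {r | ∃ x y : X, x ≠ y ∧ r = nndist x y}

instance [Finite X] : Finite (nonzeroNNDists X) :=
  Set.Finite.to_subtype <| (Set.finite_range fun p : X × X => nndist p.1 p.2).subset <| by
    rintro _ ⟨x, y, -, rfl⟩
    exact ⟨(x, y), rfl⟩

theorem pos_of_mem_nonzeroNNDists {r : ℝ≥0} (hr : r ∈ nonzeroNNDists X) : 0 < r := by
  obtain ⟨x, y, hxy, rfl⟩ := hr
  exact pos_iff_ne_zero.2 fun h => hxy (nndist_eq_zero.1 h)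

variable [Finite X]

/-- Balls are numbered through `Finite.equivFin` only so that the coordinates live in `Type`. -/
noncomputable def ballCode (x : X) (r : nonzeroNNDists X) : Fin (Nat.card (Set X)) :=
  Finite.equivFin (Set X) (ball x r)

variable [IsUltrametricDist X]

theorem ballCode_eq_iff {x y : X} {r : nonzeroNNDists X} :
    ballCode x r = ballCode y r ↔ dist x y < r := by
  rw [ballCode, ballCode, (Finite.equivFin _).apply_eq_iff_eq,
    IsUltrametricDist.ball_eq_ball_iff_s11 (NNReal.coe_pos.2 (pos_of_mem_nonzeroNNDists r.2))]

theorem maxDiffDist_ballCode [Fintype (nonzeroNNDists X)] (x y : X) :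
    maxDiffDist Subtype.val (ballCode x) (ballCode y) = nndist x y := by
  rcases eq_or_ne x y with rfl | hxy
  · simp
  · refine maxDiffDist_eq_of_ne_iff (fun r => ?_) (i₀ := ⟨nndist x y, x, y, hxy, rfl⟩) rfl
    rw [Ne, ballCode_eq_iff, not_lt, ← coe_nndist, NNReal.coe_le_coe]

end BallCode

/-- every finite ultrametric space `X` embeds isometrically into a
finite homogeneous ultrametric space `Y` whose set of nonzero distances equals that
of `X`. -/
theorem stmt_11 {X : Type*} [MetricSpace X] [Finite X]
    (hum : ∀ x y z : X, dist x z ≤ max (dist x y) (dist y z)) :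
    ∃ (Y : Type) (dY : Y → Y → ℝ) (e : X → Y),
      Finite Y ∧
      (∀ y : Y, dY y y = 0) ∧
      (∀ y₁ y₂ : Y, 0 ≤ dY y₁ y₂) ∧
      (∀ y₁ y₂ : Y, dY y₁ y₂ = dY y₂ y₁) ∧
      (∀ y₁ y₂ : Y, dY y₁ y₂ = 0 → y₁ = y₂) ∧
      (∀ y₁ y₂ y₃ : Y, dY y₁ y₃ ≤ max (dY y₁ y₂) (dY y₂ y₃)) ∧
      (∀ x₁ x₂ : X, dY (e x₁) (e x₂) = dist x₁ x₂) ∧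
      (∀ y₁ y₂ : Y, ∃ f : Y → Y, Function.Bijective f ∧
        (∀ a b : Y, dY (f a) (f b) = dY a b) ∧ f y₁ = y₂) ∧
      {d : ℝ | ∃ y₁ y₂ : Y, y₁ ≠ y₂ ∧ d = dY y₁ y₂} =
        {d : ℝ | ∃ x₁ x₂ : X, x₁ ≠ x₂ ∧ d = dist x₁ x₂} := by
  have : IsUltrametricDist X := ⟨hum⟩
  have : Fintype (nonzeroNNDists X) := Fintype.ofFinite _
  have hw (r : nonzeroNNDists X) : 0 < (r : ℝ≥0) := pos_of_mem_nonzeroNNDists r.2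
  refine ⟨nonzeroNNDists X → Fin (Nat.card (Set X)), fun a b => maxDiffDist Subtype.val a b,
    ballCode, inferInstance, ?_, ?_, ?_, ?_, ?_, ?_, ?_, ?_⟩ <;> beta_reduce
  · simp
  · exact fun a b => (maxDiffDist _ a b).coe_nonneg
  · exact fun a b => by rw [maxDiffDist_comm]
  · exact fun a b h => (maxDiffDist_eq_zero hw).1 (by exact_mod_cast h)
  · exact fun a b c => by exact_mod_cast maxDiffDist_le_max a b c
  · exact fun x y => by rw [maxDiffDist_ballCode, coe_nndist]
  · intro y₁ y₂
    obtain ⟨f, hf, hiso, hy⟩ := exists_bijective_maxDiffDist_eq (w := Subtype.val) y₁ y₂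
    exact ⟨f, hf, fun a b => by rw [hiso], hy⟩
  ext d
  constructor
  · rintro ⟨a, b, hab, rfl⟩
    obtain ⟨⟨r, x, y, hxy, rfl⟩, hr⟩ := maxDiffDist_mem_range (w := Subtype.val) hab
    exact ⟨x, y, hxy, by rw [← hr, coe_nndist]⟩
  · rintro ⟨x, y, hxy, rfl⟩
    refine ⟨ballCode x, ballCode y, fun h => hxy ?_, by rw [maxDiffDist_ballCode, coe_nndist]⟩
    simpa [h] using maxDiffDist_ballCode x y
end

section
/- Let Y be a compact metric space and suppose that for every ε > 0 and every partial isometry p: A → B between finite subsets of Y, there is a surjective isometry φ of Y with d(φ(a), p(a)) < ε for all a ∈ A. Then Y is ultrahomogeneous: every partial isometry between finite subsets of Y extends to a surjective isometry of Y. -/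
/-!
Approximate the partial isometry `f` on `A` by surjective isometries `φ n` to within `1/(n+1)`.
By compactness, `φ n` and `(φ n)⁻¹` converge pointwise along an ultrafilter finer than `atTop`;
pointwise limits of isometries are isometries, and the two limits are inverse to each other
because `dist (φ n x) y = dist x ((φ n)⁻¹ y)`. The limit is a surjective isometry that equals `f` on `A`.
-/

open Filter Topology Function

section PointwiseLimit

variable {ι X Y : Type*} {F : Filter ι}

theorem isometry_of_tendsto [PseudoEMetricSpace X] [PseudoEMetricSpace Y] [F.NeBot]
    {φ : ι → X → Y} {g : X → Y} (hφ : ∀ i, Isometry (φ i))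
    (hg : ∀ x, Tendsto (fun i => φ i x) F (𝓝 (g x))) : Isometry g := by
  intro x y
  have hlim : Tendsto (fun i => edist (φ i x) (φ i y)) F (𝓝 (edist (g x) (g y))) :=
    (hg x).edist (hg y)
  simp only [hφ _ x y, tendsto_const_nhds_iff] at hlim
  exact hlim.symm

theorem leftInverse_of_tendsto [PseudoEMetricSpace X] [EMetricSpace Y] [F.NeBot]
    {φ : ι → X → Y} {ψ : ι → Y → X} {g : X → Y} {h : Y → X} (hφ : ∀ i, Isometry (φ i))
    (hφψ : ∀ i, LeftInverse (φ i) (ψ i)) (hg : ∀ x, Tendsto (fun i => φ i x) F (𝓝 (g x)))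
    (hh : ∀ y, Tendsto (fun i => ψ i y) F (𝓝 (h y))) : LeftInverse g h := by
  intro y
  have hy : Tendsto (fun i => φ i (h y)) F (𝓝 y) := by
    rw [tendsto_iff_edist_tendsto_0]
    have hdist : ∀ i, edist (φ i (h y)) y = edist (h y) (ψ i y) := fun i => by
      rw [← hφ i (h y) (ψ i y), hφψ i y]
    simpa only [hdist, edist_comm (h y)] using (tendsto_iff_edist_tendsto_0.mp (hh y))
  exact tendsto_nhds_unique (hg (h y)) hy

end PointwiseLimit

namespace IsometryEquiv

variable {ι X Y : Type*} [MetricSpace X] [MetricSpace Y] [CompactSpace X] [CompactSpace Y]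

noncomputable def ultrafilterLim (L : Ultrafilter ι) (φ : ι → X ≃ᵢ Y) : X ≃ᵢ Y where
  toFun x := (L.map fun i => φ i x).lim
  invFun y := (L.map fun i => (φ i).symm y).lim
  left_inv := leftInverse_of_tendsto (fun i => (φ i).symm.isometry)
    (fun i => (φ i).symm_apply_apply) (fun _ => Ultrafilter.le_nhds_lim _)
    (fun _ => Ultrafilter.le_nhds_lim _)
  right_inv := leftInverse_of_tendsto (fun i => (φ i).isometry)
    (fun i => (φ i).apply_symm_apply) (fun _ => Ultrafilter.le_nhds_lim _)
    (fun _ => Ultrafilter.le_nhds_lim _)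
  isometry_toFun := isometry_of_tendsto (fun i => (φ i).isometry)
    (fun _ => Ultrafilter.le_nhds_lim _)

theorem tendsto_ultrafilterLim (L : Ultrafilter ι) (φ : ι → X ≃ᵢ Y) (x : X) :
    Tendsto (fun i => φ i x) L (𝓝 (ultrafilterLim L φ x)) :=
  Ultrafilter.le_nhds_lim _

end IsometryEquiv

/-- let `Y` be a compact metric space such that every partial isometry
between finite subsets of `Y` can be `ε`-approximated on its domain by a surjective
isometry of `Y`, for every `ε > 0`. Then `Y` is ultrahomogeneous: every partial
isometry between finite subsets extends to a surjective isometry of `Y`. -/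
theorem stmt_12 {Y : Type*} [MetricSpace Y] [CompactSpace Y]
    (happrox : ∀ ε : ℝ, 0 < ε → ∀ (A : Finset Y) (f : Y → Y),
      (∀ a ∈ A, ∀ b ∈ A, dist (f a) (f b) = dist a b) →
      ∃ φ : Y ≃ᵢ Y, ∀ a ∈ A, dist (φ a) (f a) < ε) :
    ∀ (A : Finset Y) (f : Y → Y),
      (∀ a ∈ A, ∀ b ∈ A, dist (f a) (f b) = dist a b) →
      ∃ φ : Y ≃ᵢ Y, ∀ a ∈ A, φ a = f a := by
  intro A f hf
  choose φ hφ using fun n : ℕ => happrox (1 / (n + 1)) n.one_div_pos_of_nat A f hf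
  let L : Ultrafilter ℕ := Ultrafilter.of atTop
  refine ⟨IsometryEquiv.ultrafilterLim L φ, fun a ha => ?_⟩
  have hφa : Tendsto (fun n => φ n a) atTop (𝓝 (f a)) :=
    tendsto_iff_dist_tendsto_zero.mpr <| squeeze_zero (fun _ => dist_nonneg)
      (fun n => (hφ n a ha).le) tendsto_one_div_add_atTop_nhds_zero_nat
  exact tendsto_nhds_unique (IsometryEquiv.tendsto_ultrafilterLim L φ a)
    (hφa.mono_left (Ultrafilter.of_le _))
end

section
/- Let F be a group, H ≤ F a subgroup, and N ⊴ F a normal subgroup. For p, q, r, s ∈ F, the following are equivalent: (1) there exists g ∈ F with gpNH = rNH and gqNH = sNH (as left cosets of the subgroup NH); (2) N ∩ pHr^{-1}sHq^{-1} ≠ ∅. -/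
/-!
Since `N` is normal, `NH` is the preimage of the image `H̄` of `H` in `F ⧸ N`, so both conditions
only depend on the images in `F ⧸ N`, where they become the case `N = 1`. There, if
`(gp)⁻¹r = h₁` and `(gq)⁻¹s = h₂⁻¹` then `p h₁ r⁻¹ s h₂ q⁻¹ = 1`; conversely, from such `h₁, h₂`
the translation `g = r h₁⁻¹ p⁻¹` works.
-/

open Pointwise

theorem Subgroup.exists_inv_mul_mem_and_inv_mul_mem_iff {G : Type*} [Group G] (H : Subgroup G)
    (p q r s : G) :
    (∃ g : G, (g * p)⁻¹ * r ∈ H ∧ (g * q)⁻¹ * s ∈ H) ↔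
      ∃ h₁ ∈ H, ∃ h₂ ∈ H, p * h₁ * r⁻¹ * s * h₂ * q⁻¹ = 1 := by
  constructor
  · rintro ⟨g, hr, hs⟩
    exact ⟨_, hr, _, inv_mem hs, by group⟩
  · rintro ⟨h₁, hh₁, h₂, hh₂, e⟩
    refine ⟨r * h₁⁻¹ * p⁻¹, by simpa [mul_assoc] using hh₁, ?_⟩
    have hs : (r * h₁⁻¹ * p⁻¹ * q)⁻¹ * s = h₂⁻¹ :=
      calc (r * h₁⁻¹ * p⁻¹ * q)⁻¹ * s = q⁻¹ * (p * h₁ * r⁻¹ * s * h₂ * q⁻¹) * q * h₂⁻¹ := by group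
        _ = h₂⁻¹ := by rw [e]; group
    exact hs ▸ inv_mem hh₂

/-- for a group `F`, subgroups `H ≤ F` and `N ⊴ F`, with `K = NH`,
and `p, q, r, s ∈ F`: there exists `g` with `gpNH = rNH` and `gqNH = sNH` iff
`N ∩ pHr⁻¹sHq⁻¹ ≠ ∅`. -/
theorem stmt_15 {F : Type*} [Group F] (H N : Subgroup F) [N.Normal]
    (K : Subgroup F) (hK : (K : Set F) = (N : Set F) * (H : Set F))
    (p q r s : F) :
    (∃ g : F, (g * p)⁻¹ * r ∈ K ∧ (g * q)⁻¹ * s ∈ K) ↔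
    (∃ n ∈ N, ∃ h₁ ∈ H, ∃ h₂ ∈ H, n = p * h₁ * r⁻¹ * s * h₂ * q⁻¹) := by
  set π := QuotientGroup.mk' N
  have hπ_surj : Function.Surjective π := QuotientGroup.mk'_surjective N
  have hπ_ker : π.ker = N := QuotientGroup.ker_mk' N
  have hK_comap : K = (H.map π).comap π := by
    rw [Subgroup.comap_map_eq, hπ_ker, sup_comm]
    exact SetLike.coe_injective (hK.trans (Subgroup.normal_mul N H).symm)
  calc (∃ g : F, (g * p)⁻¹ * r ∈ K ∧ (g * q)⁻¹ * s ∈ K)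
      ↔ ∃ g : F ⧸ N, (g * π p)⁻¹ * π r ∈ H.map π ∧ (g * π q)⁻¹ * π s ∈ H.map π := by
        simp only [hπ_surj.exists, hK_comap, Subgroup.mem_comap, map_mul, map_inv]
    _ ↔ ∃ h₁ ∈ H.map π, ∃ h₂ ∈ H.map π, π p * h₁ * (π r)⁻¹ * π s * h₂ * (π q)⁻¹ = 1 :=
        (H.map π).exists_inv_mul_mem_and_inv_mul_mem_iff _ _ _ _
    _ ↔ ∃ h₁ ∈ H, ∃ h₂ ∈ H, p * h₁ * r⁻¹ * s * h₂ * q⁻¹ ∈ N := by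
        simp only [Subgroup.mem_map, exists_exists_and_eq_and, ← map_inv, ← map_mul,
          ← MonoidHom.mem_ker, hπ_ker]
    _ ↔ ∃ n ∈ N, ∃ h₁ ∈ H, ∃ h₂ ∈ H, n = p * h₁ * r⁻¹ * s * h₂ * q⁻¹ :=
        ⟨fun ⟨h₁, hh₁, h₂, hh₂, hn⟩ => ⟨_, hn, h₁, hh₁, h₂, hh₂, rfl⟩,
          fun ⟨_, hn, h₁, hh₁, h₂, hh₂, e⟩ => ⟨h₁, hh₁, h₂, hh₂, e ▸ hn⟩⟩
end

section
/- Let X be a countable metric space. Then X embeds isometrically into a countable ultrahomogeneous metric space Y, where Y is obtained as an increasing union of finite metric spaces Y_n together with isometric extensions: if Y = ⋃_n Y_n where Y_1 ⊆ Y_2 ⊆ ⋯ are metric spaces and for every n and every partial isometry p of Y_n there is, for each m ≥ n, an isometry φ_m(p) of Y_m extending p with φ_m(p) ⊆ φ_{m+1}(p), then every partial isometry of Y extends to a surjective isometry of Y. -/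
/-!
The extensions `g m` obtained from a single partial isometry at level `n` are coherent from
`n` on, so they glue to one map `ψ` on `Y = ⋃ Yₘ` agreeing with `g m` on each `Yₘ`, `m ≥ n`.
Distances between two points are computed at a level containing both, so `ψ` is an isometry,
and it is onto because each `g m` maps `Yₘ` onto itself.
-/

open Set

section CoherentLimit

variable {α β : Type*} {Z : ℕ → Set α} {h : ℕ → α → β}

theorem coherent_eq_of_le (hZ : Monotone Z) (hcoh : ∀ m, ∀ a ∈ Z m, h (m + 1) a = h m a)
    {m m' : ℕ} (hmm' : m ≤ m') {a : α} (ha : a ∈ Z m) : h m' a = h m a := by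
  induction m', hmm' using Nat.le_induction with
  | base => rfl
  | succ k hmk ih => rw [hcoh k a (hZ hmk ha), ih]

noncomputable def coherentLimit (hcover : ∀ a, ∃ m, a ∈ Z m) (h : ℕ → α → β) (a : α) : β :=
  h (hcover a).choose a

variable (hZ : Monotone Z) (hcoh : ∀ m, ∀ a ∈ Z m, h (m + 1) a = h m a)
  (hcover : ∀ a, ∃ m, a ∈ Z m)
include hZ hcoh

theorem coherentLimit_eq {m : ℕ} {a : α} (ha : a ∈ Z m) : coherentLimit hcover h a = h m a :=
  calc h (hcover a).choose a
      = h (max m (hcover a).choose) a :=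
        (coherent_eq_of_le hZ hcoh (le_max_right _ _) (hcover a).choose_spec).symm
    _ = h m a := coherent_eq_of_le hZ hcoh (le_max_left _ _) ha

theorem isometry_coherentLimit [PseudoMetricSpace α] [PseudoMetricSpace β]
    (hiso : ∀ m, ∀ a ∈ Z m, ∀ b ∈ Z m, dist (h m a) (h m b) = dist a b) :
    Isometry (coherentLimit hcover h) := by
  refine Isometry.of_dist_eq fun a b => ?_
  obtain ⟨k, hak⟩ := hcover a
  obtain ⟨l, hbl⟩ := hcover b
  have ha : a ∈ Z (max k l) := hZ (le_max_left _ _) hak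
  have hb : b ∈ Z (max k l) := hZ (le_max_right _ _) hbl
  rw [coherentLimit_eq hZ hcoh hcover ha, coherentLimit_eq hZ hcoh hcover hb]
  exact hiso _ a ha b hb

end CoherentLimit

theorem surjective_coherentLimit {α : Type*} {Z : ℕ → Set α} {h : ℕ → α → α}
    (hZ : Monotone Z) (hcoh : ∀ m, ∀ a ∈ Z m, h (m + 1) a = h m a)
    (hcover : ∀ a, ∃ m, a ∈ Z m) (hsurj : ∀ m, SurjOn (h m) (Z m) (Z m)) :
    Function.Surjective (coherentLimit hcover h) := by
  intro b
  obtain ⟨m, hbm⟩ := hcover b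
  obtain ⟨a, ham, rfl⟩ := hsurj m hbm
  exact ⟨a, coherentLimit_eq hZ hcoh hcover ham⟩

theorem stmt_16_general {Y : Type*} [MetricSpace Y]
    (Yn : ℕ → Set Y) (hmono : Monotone Yn)
    (hunion : (⋃ n, Yn n) = Set.univ)
    (hext : ∀ (n : ℕ) (D : Finset Y) (f : Y → Y),
      ↑D ⊆ Yn n → (∀ a ∈ D, f a ∈ Yn n) →
      (∀ a ∈ D, ∀ b ∈ D, dist (f a) (f b) = dist a b) →
      ∃ g : ℕ → Y → Y, ∀ m : ℕ, n ≤ m →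
        Set.BijOn (g m) (Yn m) (Yn m) ∧
        (∀ a ∈ Yn m, ∀ b ∈ Yn m, dist (g m a) (g m b) = dist a b) ∧
        (∀ a ∈ D, g m a = f a) ∧
        (∀ a ∈ Yn m, g (m + 1) a = g m a)) :
    ∀ (D : Finset Y) (f : Y → Y),
      (∀ a ∈ D, ∀ b ∈ D, dist (f a) (f b) = dist a b) →
      ∃ ψ : Y ≃ᵢ Y, ∀ a ∈ D, ψ a = f a := by
  classical
  intro D f hf
  obtain ⟨n, hn⟩ := hmono.directed_le.exists_mem_subset_of_finset_subset_biUnion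
    (s := D ∪ D.image f) (hunion ▸ subset_univ _)
  rw [Finset.coe_union, union_subset_iff] at hn
  obtain ⟨g, hg⟩ := hext n D f hn.1 (fun a ha => hn.2 (Finset.mem_image_of_mem f ha)) hf
  -- From level `n` on the `g m` form a coherent family; reindex so that it starts at `0`.
  have hZ : Monotone fun m => Yn (n + m) := hmono.comp fun _ _ h => Nat.add_le_add_left h n
  have hcoh : ∀ m, ∀ a ∈ Yn (n + m), g (n + m + 1) a = g (n + m) a :=
    fun m => (hg (n + m) (Nat.le_add_right n m)).2.2.2
  have hcover : ∀ a, ∃ m, a ∈ Yn (n + m) := fun a =>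
    (mem_iUnion.1 (hunion ▸ mem_univ a)).imp fun k hk => hmono (Nat.le_add_left k n) hk
  have hiso := isometry_coherentLimit hZ hcoh hcover fun m => (hg (n + m) (Nat.le_add_right n m)).2.1
  have hsurj := surjective_coherentLimit hZ hcoh hcover fun m => (hg (n + m) (Nat.le_add_right n m)).1.surjOn
  refine ⟨⟨Equiv.ofBijective _ ⟨hiso.injective, hsurj⟩, hiso⟩, fun a ha => ?_⟩
  calc coherentLimit hcover (fun m => g (n + m)) a
      = g (n + 0) a := coherentLimit_eq hZ hcoh hcover (hn.1 ha)
    _ = f a := (hg n le_rfl).2.2.1 a ha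

/-- let `Y` be a countable metric space which is the increasing union
of finite subspaces `Y_n`, and suppose that every partial isometry `p` of `Y_n`
admits, for each `m ≥ n`, an isometry `φ_m(p)` of `Y_m` extending `p` with
`φ_m(p) ⊆ φ_{m+1}(p)`. Then every partial isometry of `Y` extends to a surjective
isometry of `Y` (i.e. `Y` is ultrahomogeneous). -/
theorem stmt_16 {Y : Type*} [MetricSpace Y] [Countable Y]
    (Yn : ℕ → Set Y) (hfin : ∀ n, (Yn n).Finite) (hmono : Monotone Yn)
    (hunion : (⋃ n, Yn n) = Set.univ)
    (hext : ∀ (n : ℕ) (D : Finset Y) (f : Y → Y),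
      ↑D ⊆ Yn n → (∀ a ∈ D, f a ∈ Yn n) →
      (∀ a ∈ D, ∀ b ∈ D, dist (f a) (f b) = dist a b) →
      ∃ g : ℕ → Y → Y, ∀ m : ℕ, n ≤ m →
        Set.BijOn (g m) (Yn m) (Yn m) ∧
        (∀ a ∈ Yn m, ∀ b ∈ Yn m, dist (g m a) (g m b) = dist a b) ∧
        (∀ a ∈ D, g m a = f a) ∧
        (∀ a ∈ Yn m, g (m + 1) a = g m a)) :
    ∀ (D : Finset Y) (f : Y → Y),
      (∀ a ∈ D, ∀ b ∈ D, dist (f a) (f b) = dist a b) →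
      ∃ ψ : Y ≃ᵢ Y, ∀ a ∈ D, ψ a = f a :=
  stmt_16_general Yn hmono hunion hext
end
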